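/- For every environment model m, every subset U ⊆ U_m, every strategy σ, and every state q: V_m(σ, q) ≤ V_m(U(σ), q). -/

import Mathlib

open scoped BigOperators

/-- A Markov decision process over finite state space `Q` and finite action space `A`:
transition probabilities `t`, reward function `r`, and discount factor `0 < γ < 1`. -/
structure MDP (Q A : Type*) [Fintype Q] [Fintype A] where
  /-- transition probabilities: `t q a` is a distribution over next states -/
  t : Q → A → Q → ℝ
  t_nonneg : ∀ q a q', 0 ≤ t q a q'
  t_sum : ∀ q a, (∑ q', t q a q') = 1
  /-- reward function -/
  r : Q → A → ℝ
  /-- discount factor -/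
  γ : ℝ
  γ_pos : 0 < γ
  γ_lt_one : γ < 1

/-- An environment model: an MDP with a distinguished "nothing" action `N`
labelling a zero-reward self-loop at every state. -/
structure EnvModel (Q A : Type*) [Fintype Q] [Fintype A] extends MDP Q A where
  /-- the distinguished "nothing" action -/
  N : A
  t_N : ∀ q, t q N q = 1
  r_N : ∀ q, r q N = 0

variable {Q A : Type*} [Fintype Q] [DecidableEq Q] [Fintype A] [DecidableEq A]

/-- `stepDist m σ i q q'`: the probability of being at state `q'` after `i` steps of
following the strategy `σ` from state `q`. -/
noncomputable def stepDist (m : MDP Q A) (σ : Q → A) : ℕ → Q → Q → ℝ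
  | 0 => fun q q' => if q = q' then 1 else 0
  | i + 1 => fun q q' => ∑ q'', stepDist m σ i q q'' * m.t q'' (σ q'') q'

/-- `V m σ q`: the expected total discounted reward of following strategy `σ` from
state `q`; it is the unique bounded solution of the Bellman equation
`V m σ q = r q (σ q) + γ * ∑ q', t q (σ q) q' * V m σ q'`. -/
noncomputable def V (m : MDP Q A) (σ : Q → A) (q : Q) : ℝ :=
  ∑' i : ℕ, m.γ ^ i * ∑ q', stepDist m σ i q q' * m.r q' (σ q')

/-- `V*_m(q) = max_σ V_m(σ,q)`. -/
noncomputable def Vstar (m : MDP Q A) (q : Q) : ℝ := ⨆ σ : Q → A, V m σ q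

/-- the set of optimal strategies -/
def opt (m : MDP Q A) : Set (Q → A) := {σ | ∀ q, V m σ q = Vstar m q}

/-- `Q_m(σ,q,a) = r(q,a) + γ * ∑_{q'} t(q,a)(q') * V_m(σ,q')`. -/
noncomputable def Qval (m : MDP Q A) (σ : Q → A) (q : Q) (a : A) : ℝ :=
  m.r q a + m.γ * ∑ q', m.t q a q' * V m σ q'

/-- `Q*_m(q,a) = r(q,a) + γ * ∑_{q'} t(q,a)(q') * V*_m(q')`. -/
noncomputable def Qstar (m : MDP Q A) (q : Q) (a : A) : ℝ :=
  m.r q a + m.γ * ∑ q', m.t q a q' * Vstar m q'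

/-- The set `U_m` of useless state-action pairs. -/
def Uset (m : EnvModel Q A) : Set (Q × A) :=
  {p | p.2 ≠ m.N ∧ ∀ σ : Q → A, Qval m.toMDP σ p.1 p.2 ≤ 0}

open Classical in
/-- `U(σ)`: replace `σ`'s action by the nothing action `N` at exactly those states `q`
with `⟨q, σ q⟩ ∈ U`. -/
noncomputable def applyU (m : EnvModel Q A) (U : Set (Q × A)) (σ : Q → A) : Q → A :=
  fun q => if (q, σ q) ∈ U then m.N else σ q

/-- A contingency `κ` is consistent with `m` when it only picks states of positive
transition probability. -/
def Consistent (m : MDP Q A) (κ : Q → A → ℕ → Q) : Prop :=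
  ∀ q a i, 0 < m.t q a (κ q a i)

/-- One step of the execution determined by `σ` and `κ`: the current state together
with the occurrence counts of each state-action pair so far. -/
def execStep (σ : Q → A) (κ : Q → A → ℕ → Q) :
    Q × (Q × A → ℕ) → Q × (Q × A → ℕ) :=
  fun s =>
    (κ s.1 (σ s.1) (s.2 (s.1, σ s.1)),
     fun p => if p = (s.1, σ s.1) then s.2 p + 1 else s.2 p)

/-- the `i`-th state of the execution `m(q,κ,σ)` -/
def execState (σ : Q → A) (κ : Q → A → ℕ → Q) (q : Q) (i : ℕ) : Q :=
  ((execStep σ κ)^[i] (q, fun _ => 0)).1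

/-- the execution `m(q,κ,σ) = [q₀, a₁, q₁, a₂, …]`, as the sequence of pairs
`i ↦ (q_i, a_{i+1})` (so `a_{i+1} = σ q_i`). -/
def execOf (σ : Q → A) (κ : Q → A → ℕ → Q) (q : Q) (i : ℕ) : Q × A :=
  (execState σ κ q i, σ (execState σ κ q i))

/-- the execution flattened into the alternating sequence `[q₀, a₁, q₁, a₂, …]`
(position `2i` holds `q_i`, position `2i+1` holds `a_{i+1}`). -/
def flatExec (e : ℕ → Q × A) (j : ℕ) : Q ⊕ A :=
  if j % 2 = 0 then Sum.inl (e (j / 2)).1 else Sum.inr (e (j / 2)).2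

open Classical in
/-- `active(e)`: the prefix of the alternating sequence of `e` strictly before the
first occurrence of the nothing action `N` (all of it if `N` never occurs);
positions past the cut-off are `none`. -/
noncomputable def activeSeq (N : A) (e : ℕ → Q × A) (j : ℕ) : Option (Q ⊕ A) :=
  if ∃ i, 2 * i + 1 ≤ j ∧ (e i).2 = N then none else some (flatExec e j)

/-- `f` is a subsequence of `g` (for possibly-cut-off sequences). -/
def OptSubseq {X : Type*} (f g : ℕ → Option X) : Prop :=
  ∃ φ : ℕ → ℕ, StrictMono φ ∧ ∀ j, f j ≠ none → f j = g (φ j)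

/-- `e₁` is a proper sub-execution of `e₂`: `active(e₁)` is a proper subsequence
of `active(e₂)`. -/
def ProperSubexec (N : A) (e₁ e₂ : ℕ → Q × A) : Prop :=
  OptSubseq (activeSeq N e₁) (activeSeq N e₂) ∧ activeSeq N e₁ ≠ activeSeq N e₂

/-- `σ' ≺ σ`: for every consistent contingency `κ` and state `q`, `m(q,κ,σ')` is a
proper sub-execution of or equal to `m(q,κ,σ)`, and for at least one consistent
contingency and state it is a proper sub-execution. -/
def prec (m : EnvModel Q A) (σ' σ : Q → A) : Prop :=
  (∀ κ, Consistent m.toMDP κ → ∀ q,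
      ProperSubexec m.N (execOf σ' κ q) (execOf σ κ q) ∨ execOf σ' κ q = execOf σ κ q) ∧
  (∃ κ q, Consistent m.toMDP κ ∧ ProperSubexec m.N (execOf σ' κ q) (execOf σ κ q))

/-- `opt*(m)`: optimal strategies that are non-redundant. -/
def optStar (m : EnvModel Q A) : Set (Q → A) :=
  {σ | σ ∈ opt m.toMDP ∧ ¬∃ σ' ∈ opt m.toMDP, prec m σ' σ}

/-- A behavior `[q₀, a₁, q₁, …, a_n, q_n]`: the list of pairs `(q_i, a_{i+1})`
for `0 ≤ i < n` together with the final state `q_n`. -/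
structure Behavior (Q A : Type*) where
  steps : List (Q × A)
  last : Q

/-- `strg(b)`: the strategies that could have produced the behavior `b`. -/
def strg (b : Behavior Q A) : Set (Q → A) :=
  {σ | ∀ p ∈ b.steps, σ p.1 = p.2}

/-- the behavior flattened into the alternating list `[q₀, a₁, q₁, …, a_n, q_n]` -/
def flatBehavior (b : Behavior Q A) : List (Q ⊕ A) :=
  (b.steps.flatMap fun p => [Sum.inl p.1, Sum.inr p.2]) ++ [Sum.inl b.last]

/-- the behavior `b` is a subsequence of the execution `e` -/
def BehvSubseq (b : Behavior Q A) (e : ℕ → Q × A) : Prop :=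
  ∃ φ : ℕ → ℕ, StrictMono φ ∧
    ∀ j (h : j < (flatBehavior b).length),
      (flatBehavior b).get ⟨j, h⟩ = flatExec e (φ j)

/-- `behv*(m)`: behaviors exhibited by some non-redundant optimal strategy under some
consistent contingency from some state. -/
def behvStar (m : EnvModel Q A) : Set (Behavior Q A) :=
  {b | ∃ σ ∈ optStar m, ∃ κ q, Consistent m.toMDP κ ∧ BehvSubseq b (execOf σ κ q)}

/-- the state `q_{i+1}` following the `i`-th step of the behavior `b` -/
def nextStateOf (b : Behavior Q A) (i : ℕ) : Q :=
  if h : i + 1 < b.steps.length then (b.steps.get ⟨i + 1, h⟩).1 else b.last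

/-- `b` could actually be observed: `t(q_i, a_{i+1})(q_{i+1}) > 0` for all `0 ≤ i < n`. -/
def Observable (m : MDP Q A) (b : Behavior Q A) : Prop :=
  ∀ i (h : i < b.steps.length),
    0 < m.t (b.steps.get ⟨i, h⟩).1 (b.steps.get ⟨i, h⟩).2 (nextStateOf b i)

/-- `r* = max_{q,a} |r(q,a)|` -/
noncomputable def rstar (m : MDP Q A) : ℝ := ⨆ p : Q × A, |m.r p.1 p.2|

/-- the reward function of `fix(m,b)`, defined recursively along the behavior -/
noncomputable def fixR (ω : ℝ) : (Q → A → ℝ) → List (Q × A) → Q → A → ℝ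
  | r, [] => r
  | r, s :: rest => fixR ω (fun q a => if q = s.1 ∧ a ≠ s.2 then -ω else r q a) rest

/-- `fix(m,b)`: the MDP `m` with its reward function modified so that deviating from
the actions of `b` at the states of `b` incurs the penalty `-ω`. -/
noncomputable def fixMDP (m : MDP Q A) (ω : ℝ) (b : Behavior Q A) : MDP Q A :=
  { m with r := fixR ω m.r b.steps }

section Aux

variable {Q A : Type*} [Fintype Q] [DecidableEq Q] [Fintype A] [DecidableEq A]

lemma stepDist_nonneg (m : MDP Q A) (σ : Q → A) :
    ∀ i q q', 0 ≤ stepDist m σ i q q' := by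
  intro i
  induction i with
  | zero => intro q q'; simp only [stepDist]; split <;> norm_num
  | succ i ih =>
    intro q q'
    simp only [stepDist]
    exact Finset.sum_nonneg fun q'' _ => mul_nonneg (ih q q'') (m.t_nonneg _ _ _)

lemma stepDist_sum (m : MDP Q A) (σ : Q → A) :
    ∀ i q, ∑ q', stepDist m σ i q q' = 1 := by
  intro i
  induction i with
  | zero => intro q; simp [stepDist]
  | succ i ih =>
    intro q
    simp only [stepDist]
    rw [Finset.sum_comm]
    calc ∑ q'' ∈ Finset.univ, ∑ q' ∈ Finset.univ,
          stepDist m σ i q q'' * m.t q'' (σ q'') q'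
        = ∑ q'' ∈ Finset.univ, stepDist m σ i q q'' * ∑ q', m.t q'' (σ q'') q' := by
          simp [Finset.mul_sum]
      _ = 1 := by simp [m.t_sum, ih q]

lemma stepDist_le_one (m : MDP Q A) (σ : Q → A) (i : ℕ) (q q' : Q) :
    stepDist m σ i q q' ≤ 1 := by
  calc stepDist m σ i q q' ≤ ∑ q'', stepDist m σ i q q'' :=
        Finset.single_le_sum (fun q'' _ => stepDist_nonneg m σ i q q'')
          (Finset.mem_univ q')
    _ = 1 := stepDist_sum m σ i q

lemma summable_V (m : MDP Q A) (σ : Q → A) (q : Q) :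
    Summable (fun i : ℕ => m.γ ^ i * ∑ q', stepDist m σ i q q' * m.r q' (σ q')) := by
  have hγ0 := m.γ_pos.le
  have hgeo : Summable (fun i : ℕ => m.γ ^ i * ∑ q', |m.r q' (σ q')|) :=
    (summable_geometric_of_lt_one hγ0 m.γ_lt_one).mul_right _
  refine Summable.of_abs (Summable.of_nonneg_of_le (fun i => abs_nonneg _) ?_ hgeo)
  · intro i
    show |m.γ ^ i * ∑ q', stepDist m σ i q q' * m.r q' (σ q')| ≤ _
    rw [abs_mul, abs_pow, abs_of_nonneg hγ0]
    refine mul_le_mul_of_nonneg_left ?_ (pow_nonneg hγ0 i)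
    calc |∑ q', stepDist m σ i q q' * m.r q' (σ q')|
        ≤ ∑ q', |stepDist m σ i q q' * m.r q' (σ q')| := Finset.abs_sum_le_sum_abs _ _
      _ ≤ ∑ q', |m.r q' (σ q')| := by
          refine Finset.sum_le_sum fun q' _ => ?_
          rw [abs_mul, abs_of_nonneg (stepDist_nonneg m σ i q q')]
          exact mul_le_of_le_one_left (abs_nonneg _) (stepDist_le_one m σ i q q')

lemma stepDist_succ' (m : MDP Q A) (σ : Q → A) :
    ∀ i q q', stepDist m σ (i + 1) q q'
      = ∑ q'', m.t q (σ q) q'' * stepDist m σ i q'' q' := by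
  intro i
  induction i with
  | zero =>
    intro q q'
    simp [stepDist, ite_mul, mul_ite]
  | succ i ih =>
    intro q q'
    calc stepDist m σ (i + 2) q q'
        = ∑ q'', stepDist m σ (i+1) q q'' * m.t q'' (σ q'') q' := rfl
      _ = ∑ q'', (∑ q₃, m.t q (σ q) q₃ * stepDist m σ i q₃ q'') * m.t q'' (σ q'') q' := by
          simp_rw [ih]
      _ = ∑ q₃, m.t q (σ q) q₃ * ∑ q'', stepDist m σ i q₃ q'' * m.t q'' (σ q'') q' := by
          simp_rw [Finset.sum_mul, mul_assoc]
          rw [Finset.sum_comm]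
          simp_rw [← Finset.mul_sum]
      _ = ∑ q₃, m.t q (σ q) q₃ * stepDist m σ (i+1) q₃ q' := rfl

lemma V_bellman (m : MDP Q A) (σ : Q → A) (q : Q) :
    V m σ q = m.r q (σ q) + m.γ * ∑ q', m.t q (σ q) q' * V m σ q' := by
  have hsum := summable_V m σ q
  unfold V
  rw [Summable.tsum_eq_zero_add hsum]
  congr 1
  · simp [stepDist, Finset.sum_ite_eq]
  · have key : ∀ i : ℕ,
        m.γ ^ (i + 1) * ∑ q', stepDist m σ (i+1) q q' * m.r q' (σ q')
        = ∑ q'', m.t q (σ q) q'' *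
            (m.γ * (m.γ ^ i * ∑ q', stepDist m σ i q'' q' * m.r q' (σ q'))) := by
      intro i
      simp_rw [stepDist_succ', Finset.sum_mul, Finset.mul_sum]
      rw [Finset.sum_comm]
      ring_nf
    calc (∑' i : ℕ, m.γ ^ (i + 1) * ∑ q', stepDist m σ (i+1) q q' * m.r q' (σ q'))
        = ∑' i : ℕ, ∑ q'', m.t q (σ q) q'' *
            (m.γ * (m.γ ^ i * ∑ q', stepDist m σ i q'' q' * m.r q' (σ q'))) := by
          simp_rw [key]
      _ = ∑ q'', ∑' i : ℕ, m.t q (σ q) q'' *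
            (m.γ * (m.γ ^ i * ∑ q', stepDist m σ i q'' q' * m.r q' (σ q'))) := by
          refine Summable.tsum_finsetSum fun q'' _ => ?_
          exact ((summable_V m σ q'').mul_left _).mul_left _
      _ = m.γ * ∑ q', m.t q (σ q) q' * V m σ q' := by
          rw [Finset.mul_sum]
          refine Finset.sum_congr rfl fun q'' _ => ?_
          rw [tsum_mul_left, tsum_mul_left]
          unfold V
          ring

lemma sum_t_N (m : EnvModel Q A) (q : Q) (f : Q → ℝ) :
    ∑ q', m.t q m.N q' * f q' = f q := by
  have hz : ∀ q' ≠ q, m.t q m.N q' = 0 := by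
    intro q' hne
    have h0 : ∑ x ∈ ({q}ᶜ : Finset Q), m.t q m.N x = 0 := by
      have h2 := Finset.sum_add_sum_compl ({q} : Finset Q) (m.t q m.N)
      rw [m.t_sum] at h2
      have h1 : ∑ x ∈ ({q} : Finset Q), m.t q m.N x = 1 := by simp [m.t_N]
      linarith
    exact (Finset.sum_eq_zero_iff_of_nonneg fun x _ => m.t_nonneg _ _ _).mp h0 q'
      (by simp [hne])
  rw [Fintype.sum_eq_single q (fun x hx => by rw [hz x hx, zero_mul])]
  simp [m.t_N]

end Aux

/-- For every `U ⊆ U_m`, strategy `σ`, and state `q`,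
`V_m(σ, q) ≤ V_m(U(σ), q)`. -/
theorem V_le_V_applyU
    {Q A : Type*} [Fintype Q] [DecidableEq Q] [Fintype A] [DecidableEq A]
    (m : EnvModel Q A) (U : Set (Q × A)) (hU : U ⊆ Uset m)
    (σ : Q → A) (q : Q) :
    V m.toMDP σ q ≤ V m.toMDP (applyU m U σ) q := by
  classical
  set σ' := applyU m U σ with hσ'
  have key : ∀ q, V m.toMDP σ q
      ≤ m.r q (σ' q) + m.γ * ∑ q', m.t q (σ' q) q' * V m.toMDP σ q' := by
    intro q
    by_cases h : (q, σ q) ∈ U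
    · have hNq : σ' q = m.N := by simp [hσ', applyU, h]
      rw [hNq, m.r_N, sum_t_N m q (V m.toMDP σ)]
      have hQ : Qval m.toMDP σ q (σ q) ≤ 0 := (hU h).2 σ
      have hV : V m.toMDP σ q ≤ 0 := by
        rw [V_bellman]
        simpa [Qval] using hQ
      nlinarith [m.γ_pos, m.γ_lt_one]
    · have hs : σ' q = σ q := by simp [hσ', applyU, h]
      rw [hs, ← V_bellman]
  set C : ℝ := ∑ q'', |V m.toMDP σ q'' - V m.toMDP σ' q''| with hC
  have hC0 : 0 ≤ C := Finset.sum_nonneg fun _ _ => abs_nonneg _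
  have main : ∀ n, ∀ q, V m.toMDP σ q ≤ V m.toMDP σ' q + m.γ ^ n * C := by
    intro n
    induction n with
    | zero =>
      intro q
      have h1 : V m.toMDP σ q - V m.toMDP σ' q ≤ C := by
        calc V m.toMDP σ q - V m.toMDP σ' q
            ≤ |V m.toMDP σ q - V m.toMDP σ' q| := le_abs_self _
          _ ≤ C := Finset.single_le_sum
              (f := fun x => |V m.toMDP σ x - V m.toMDP σ' x|)
              (fun x _ => abs_nonneg _) (Finset.mem_univ q)
      rw [pow_zero, one_mul]
      linarith
    | succ n ih =>
      intro q
      have hsplit : (∑ q', m.t q (σ' q) q' * (V m.toMDP σ' q' + m.γ ^ n * C))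
          = (∑ q', m.t q (σ' q) q' * V m.toMDP σ' q') + m.γ ^ n * C := by
        simp_rw [mul_add]
        rw [Finset.sum_add_distrib, ← Finset.sum_mul, m.t_sum, one_mul]
      calc V m.toMDP σ q
          ≤ m.r q (σ' q) + m.γ * ∑ q', m.t q (σ' q) q' * V m.toMDP σ q' := key q
        _ ≤ m.r q (σ' q) + m.γ * ∑ q', m.t q (σ' q) q' * (V m.toMDP σ' q' + m.γ ^ n * C) := by
            refine add_le_add (le_refl _) (mul_le_mul_of_nonneg_left ?_ m.γ_pos.le)
            exact Finset.sum_le_sum fun q' _ =>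
              mul_le_mul_of_nonneg_left (ih q') (m.t_nonneg _ _ _)
        _ = V m.toMDP σ' q + m.γ ^ (n + 1) * C := by
            rw [hsplit, V_bellman m.toMDP σ' q]
            ring
  have htend : Filter.Tendsto (fun n : ℕ => V m.toMDP σ' q + m.γ ^ n * C)
      Filter.atTop (nhds (V m.toMDP σ' q)) := by
    have := (tendsto_pow_atTop_nhds_zero_of_lt_one m.γ_pos.le m.γ_lt_one).mul_const C
    simpa using Filter.Tendsto.add (tendsto_const_nhds (x := V m.toMDP σ' q)) this
  exact ge_of_tendsto' htend (fun n => main n q)
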